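/- arXiv:1803.02420 — 7 statements merged into one kernel-verified Lean document; each statement's English description precedes it below -/
import Mathlib

section
/- If G is a finite group with |G| ≥ 3, then an element x ∈ G is an end vertex of the coprime graph of G (i.e., x is adjacent only to the identity) if and only if x ≠ e and rad(|x|) = rad(|G|), where rad(n) denotes the product of the distinct prime divisors of n. -/
/-- Radical of a natural number: product of its distinct prime divisors. -/
def rad (n : ℕ) : ℕ := n.primeFactors.prod id

/-- The coprime graph of a group: vertices are group elements, distinct
elements adjacent iff their orders are coprime. -/
def coprimeGraph (G : Type*) [Group G] : SimpleGraph G where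
  Adj x y := x ≠ y ∧ Nat.Coprime (orderOf x) (orderOf y)
  symm := by constructor; intro x y h; exact ⟨h.1.symm, h.2.symm⟩
  loopless := by constructor; intro x h; exact h.1 rfl

noncomputable instance (G : Type*) [Group G] [DecidableEq G] :
    DecidableRel (coprimeGraph G).Adj :=
  fun x y => inferInstanceAs (Decidable (x ≠ y ∧ Nat.Coprime (orderOf x) (orderOf y)))

/-- The set of non-identity end vertices of the coprime graph of `G`. -/
noncomputable def endVerts (G : Type*) [Group G] [Fintype G] [DecidableEq G] : Finset G :=
  Finset.univ.filter (fun x => x ≠ 1 ∧ rad (orderOf x) = rad (Fintype.card G))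

lemma rad_eq_iff {m n : ℕ} : rad m = rad n ↔ m.primeFactors = n.primeFactors := by
  constructor
  · intro h
    have hm := Nat.primeFactors_prod (s := m.primeFactors)
      (fun p hp => Nat.prime_of_mem_primeFactors hp)
    have hn := Nat.primeFactors_prod (s := n.primeFactors)
      (fun p hp => Nat.prime_of_mem_primeFactors hp)
    rw [← hm, ← hn]
    simpa [rad] using congrArg Nat.primeFactors h
  · intro h; simp [rad, h]

theorem stmt0 (G : Type*) [Group G] [Fintype G] [DecidableEq G]
    (hG : 3 ≤ Fintype.card G) (x : G) :
    (coprimeGraph G).degree x = 1 ↔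
      (x ≠ 1 ∧ rad (orderOf x) = rad (Fintype.card G)) := by
  have hcard : Fintype.card G ≠ 0 := Fintype.card_ne_zero
  have hdegdef : (coprimeGraph G).degree x = ((coprimeGraph G).neighborFinset x).card := rfl
  constructor
  · intro hdeg
    have hx1 : x ≠ 1 := by
      rintro rfl
      have hsub : Finset.univ.erase (1 : G) ⊆ (coprimeGraph G).neighborFinset 1 := by
        intro y hy
        rw [SimpleGraph.mem_neighborFinset]
        exact ⟨(Finset.ne_of_mem_erase hy).symm, by simp⟩
      have h2 := Finset.card_le_card hsub
      rw [Finset.card_erase_of_mem (Finset.mem_univ _), Finset.card_univ] at h2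
      rw [hdegdef] at hdeg
      omega
    refine ⟨hx1, rad_eq_iff.mpr (Finset.Subset.antisymm
      (Nat.primeFactors_mono (orderOf_dvd_card) hcard) ?_)⟩
    intro p hp
    have hpp : p.Prime := Nat.prime_of_mem_primeFactors hp
    have hox : orderOf x ≠ 0 := orderOf_pos x |>.ne'
    rw [Nat.mem_primeFactors]
    refine ⟨hpp, ?_, hox⟩
    by_contra hpx
    have : Fact p.Prime := ⟨hpp⟩
    obtain ⟨y, hy⟩ := exists_prime_orderOf_dvd_card p (Nat.dvd_of_mem_primeFactors hp)
    have hy1 : y ≠ 1 := by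
      intro h; rw [h, orderOf_one] at hy; exact hpp.one_lt.ne' hy.symm
    have hyx : y ≠ x := by
      intro h; rw [h] at hy; exact hpx (hy ▸ dvd_refl _)
    have hsub : ({1, y} : Finset G) ⊆ (coprimeGraph G).neighborFinset x := by
      intro z hz
      rw [SimpleGraph.mem_neighborFinset]
      rcases Finset.mem_insert.mp hz with h | h
      · subst h; exact ⟨hx1, by simp⟩
      · rw [Finset.mem_singleton] at h; subst h
        exact ⟨hyx.symm, hy ▸ ((hpp.coprime_iff_not_dvd.mpr hpx).symm)⟩
    have h2 := Finset.card_le_card hsub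
    rw [Finset.card_insert_of_notMem (by simpa using hy1.symm), Finset.card_singleton] at h2
    rw [hdegdef] at hdeg
    omega
  · rintro ⟨hx1, hrad⟩
    have hpf := rad_eq_iff.mp hrad
    have hset : (coprimeGraph G).neighborFinset x = {1} := by
      ext y
      rw [SimpleGraph.mem_neighborFinset, Finset.mem_singleton]
      constructor
      · rintro ⟨hne, hcop⟩
        by_contra hy1
        have hoy : 1 < orderOf y := by
          have := orderOf_pos y
          rcases Nat.lt_or_ge 1 (orderOf y) with h | h
          · exact h
          · exact absurd (orderOf_eq_one_iff.mp (by omega)) hy1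
        obtain ⟨p, hpp, hpy⟩ := (orderOf y).exists_prime_and_dvd (by omega)
        have hpG : p ∣ Fintype.card G := hpy.trans orderOf_dvd_card
        have hpx : p ∣ orderOf x := by
          have : p ∈ (Fintype.card G).primeFactors :=
            Nat.mem_primeFactors.mpr ⟨hpp, hpG, hcard⟩
          exact Nat.dvd_of_mem_primeFactors (hpf ▸ this)
        exact hpp.one_lt.ne' (Nat.eq_one_of_dvd_coprimes hcop hpx hpy)
      · rintro rfl
        exact ⟨hx1, by simp⟩
    rw [hdegdef, hset, Finset.card_singleton]
end

section
/- If G is a finite group with |G| ≥ 3 and x ∈ E_G, then φ(|x|) ≤ |E_G|, where φ is Euler's totient function. -/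
theorem stmt1 (G : Type*) [Group G] [Fintype G] [DecidableEq G]
    (hG : 3 ≤ Fintype.card G) (x : G) (hx : x ∈ endVerts G) :
    Nat.totient (orderOf x) ≤ (endVerts G).card := by
  simp only [endVerts, Finset.mem_filter] at hx
  obtain ⟨-, hx1, hrad⟩ := hx
  set n := orderOf x with hn
  have hn1 : 1 < n := lt_of_le_of_ne (orderOf_pos x) (fun h => hx1 (orderOf_eq_one_iff.mp h.symm))
  rw [Nat.totient]
  apply Finset.card_le_card_of_injOn (fun k => x ^ k)
  · intro k hk
    simp only [Finset.mem_coe, Finset.mem_filter, Finset.mem_range] at hk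
    have hord : orderOf (x ^ k) = n := Nat.Coprime.orderOf_pow hk.2
    simp only [endVerts, Finset.mem_coe, Finset.mem_filter, Finset.mem_univ, true_and]
    constructor
    · intro h
      rw [h, orderOf_one] at hord
      omega
    · rw [hord]; exact hrad
  · intro a ha b hb hab
    simp only [Finset.mem_coe, Finset.mem_filter, Finset.mem_range] at ha hb
    exact pow_injOn_Iio_orderOf ha.1 hb.1 hab
end

section
/- If G is a finite group with |G| ≥ 3 and there exists x ∈ E_G with φ(|x|) = |E_G|, then |x| is squarefree (rad(|x|) = |x|) and ⟨x⟩ is the unique cyclic subgroup of G of order |x|. -/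
theorem stmt2 (G : Type*) [Group G] [Fintype G] [DecidableEq G]
    (hG : 3 ≤ Fintype.card G) (x : G) (hx : x ∈ endVerts G)
    (hphi : Nat.totient (orderOf x) = (endVerts G).card) :
    rad (orderOf x) = orderOf x ∧
      ∀ H : Subgroup G, IsCyclic H → Nat.card H = orderOf x →
        H = Subgroup.zpowers x := by
  classical
  simp only [endVerts, Finset.mem_filter, Finset.mem_univ, true_and] at hx
  obtain ⟨hx1, hxrad⟩ := hx
  set n := orderOf x with hn
  have hn0 : 0 < n := orderOf_pos x
  have hn1 : 1 < n := by
    have : n ≠ 1 := fun h => hx1 (orderOf_eq_one_iff.mp h)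
    omega
  have hcoe : ∀ (K : Subgroup G) (z : K), orderOf (z : G) = orderOf z := by
    intro K z
    simpa using orderOf_injective K.subtype (Subgroup.subtype_injective _) z
  haveI : IsCyclic (Subgroup.zpowers x) :=
    ⟨⟨⟨x, Subgroup.mem_zpowers x⟩, by
      rintro ⟨y, k, rfl⟩
      exact ⟨k, rfl⟩⟩⟩
  -- the finset of generators of ⟨x⟩, as a finset of G
  set T : Finset G :=
    (Finset.univ.filter fun y : Subgroup.zpowers x => orderOf y = n).image
      (Subtype.val : Subgroup.zpowers x → G) with hT
  have hTcard : T.card = Nat.totient n := by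
    rw [hT, Finset.card_image_of_injective _ Subtype.val_injective]
    have hdvd : n ∣ Fintype.card (Subgroup.zpowers x) := by
      rw [Fintype.card_zpowers]
    exact IsCyclic.card_orderOf_eq_totient hdvd
  have hTmem : ∀ y : G, y ∈ T ↔ y ∈ Subgroup.zpowers x ∧ orderOf y = n := by
    intro y
    constructor
    · intro hy
      rw [hT, Finset.mem_image] at hy
      obtain ⟨z, hz, rfl⟩ := hy
      rw [Finset.mem_filter] at hz
      exact ⟨z.2, by rw [hcoe, hz.2]⟩
    · rintro ⟨hy, hord⟩
      rw [hT, Finset.mem_image]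
      exact ⟨⟨y, hy⟩, Finset.mem_filter.mpr ⟨Finset.mem_univ _,
        by rw [← hcoe (Subgroup.zpowers x) ⟨y, hy⟩]; exact hord⟩, rfl⟩
  have hTsub : T ⊆ endVerts G := by
    intro y hy
    rw [hTmem] at hy
    simp only [endVerts, Finset.mem_filter, Finset.mem_univ, true_and]
    constructor
    · intro h1
      rw [h1, orderOf_one] at hy
      omega
    · rw [hy.2]; exact hxrad
  have hEV : endVerts G = T :=
    (Finset.eq_of_subset_of_card_le hTsub (by rw [hTcard, ← hphi])).symm
  -- squarefreeness
  have hsq : Squarefree n := by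
    rw [Nat.squarefree_iff_prime_squarefree]
    intro p hp hpp
    have hpn : p ∣ n := dvd_trans (dvd_mul_right p p) hpp
    have hpdiv : p ∣ n / p := (Nat.dvd_div_iff_mul_dvd hpn).mpr hpp
    have hp1 : 1 < p := hp.one_lt
    have hnp0 : n / p ≠ 0 := by
      intro h
      rw [Nat.div_eq_zero_iff] at h
      have := Nat.le_of_dvd (by omega) hpn
      omega
    have hordy : orderOf (x ^ p) = n / p := by
      rw [orderOf_pow, Nat.gcd_eq_right hpn]
    have hnp1 : 1 < n / p := by
      have := Nat.le_of_dvd (by omega) hpdiv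
      omega
    have hradnp : rad (n / p) = rad n := by
      unfold rad
      congr 1
      apply Finset.ext
      intro q
      simp only [Nat.mem_primeFactors]
      constructor
      · rintro ⟨hq, hqd, -⟩
        exact ⟨hq, hqd.trans (Nat.div_dvd_of_dvd hpn), by omega⟩
      · rintro ⟨hq, hqd, -⟩
        refine ⟨hq, ?_, hnp0⟩
        rcases eq_or_ne q p with rfl | hne
        · exact hpdiv
        · have hcop : Nat.Coprime q p := (Nat.coprime_primes hq hp).mpr hne
          have : q ∣ p * (n / p) := by rwa [Nat.mul_div_cancel' hpn]
          exact hcop.dvd_of_dvd_mul_left this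
    have hymem : x ^ p ∈ endVerts G := by
      simp only [endVerts, Finset.mem_filter, Finset.mem_univ, true_and]
      constructor
      · intro h1
        rw [h1, orderOf_one] at hordy
        omega
      · rw [hordy, hradnp]; exact hxrad
    rw [hEV, hTmem] at hymem
    have : n / p = n := by rw [← hordy, hymem.2]
    have hlt : n / p < n := Nat.div_lt_self (by omega) hp1
    omega
  refine ⟨?_, ?_⟩
  · exact Nat.prod_primeFactors_of_squarefree hsq
  · intro H hHc hHcard
    obtain ⟨g, hg⟩ := hHc.exists_generator
    have hgord : orderOf (g : G) = n := by
      rw [hcoe, orderOf_eq_card_of_forall_mem_zpowers hg, hHcard]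
    have hgmem : (g : G) ∈ endVerts G := by
      simp only [endVerts, Finset.mem_filter, Finset.mem_univ, true_and]
      constructor
      · intro h1
        rw [h1, orderOf_one] at hgord
        omega
      · rw [hgord]; exact hxrad
    rw [hEV, hTmem] at hgmem
    have hzgH : Subgroup.zpowers (g : G) = H := by
      apply Subgroup.eq_of_le_of_card_ge (Subgroup.zpowers_le.mpr g.2)
      rw [hHcard, Nat.card_zpowers, hgord]
    have hzgx : Subgroup.zpowers (g : G) = Subgroup.zpowers x := by
      apply Subgroup.eq_of_le_of_card_ge (Subgroup.zpowers_le.mpr hgmem.1)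
      rw [Nat.card_zpowers, Nat.card_zpowers, hgord]
    rw [← hzgH, hzgx]
end

section
/- Let G be a finite group and p a prime. If E_G contains an element whose order is a power of p, then G is a p-group and |G| = |E_G| + 1. -/
theorem stmt4 (G : Type*) [Group G] [Fintype G] [DecidableEq G]
    (p : ℕ) (hp : p.Prime) (x : G) (hx : x ∈ endVerts G)
    (k : ℕ) (hord : orderOf x = p ^ k) :
    IsPGroup p G ∧ Fintype.card G = (endVerts G).card + 1 := by
  simp only [endVerts, Finset.mem_filter, Finset.mem_univ, true_and] at hx
  obtain ⟨hx1, hrad⟩ := hx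
  have hk : k ≠ 0 := by
    rintro rfl
    exact hx1 (orderOf_eq_one_iff.mp (by simpa using hord))
  have hradx : rad (orderOf x) = p := by
    rw [hord, rad, Nat.primeFactors_pow _ hk, Nat.Prime.primeFactors hp]
    simp
  have hradG : rad (Fintype.card G) = p := hrad.symm.trans hradx
  have hcard0 : Fintype.card G ≠ 0 := Fintype.card_ne_zero
  have hdvd : ∀ {q : ℕ}, q.Prime → q ∣ Fintype.card G → q = p := by
    intro q hq hqdvd
    have hq' : q ∈ (Fintype.card G).primeFactors :=
      Nat.mem_primeFactors.mpr ⟨hq, hqdvd, hcard0⟩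
    have : q ∣ rad (Fintype.card G) := Finset.dvd_prod_of_mem id hq'
    rw [hradG] at this
    exact (Nat.prime_dvd_prime_iff_eq hq hp).mp this
  have hpow : Fintype.card G = p ^ (Fintype.card G).primeFactorsList.length :=
    Nat.eq_prime_pow_of_unique_prime_dvd hcard0 hdvd
  have : Fact p.Prime := ⟨hp⟩
  have hpg : IsPGroup p G := IsPGroup.iff_card.mpr ⟨_, by rw [Nat.card_eq_fintype_card]; exact hpow⟩
  refine ⟨hpg, ?_⟩
  have hEV : endVerts G = Finset.univ.filter (· ≠ 1) := by
    apply Finset.filter_congr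
    intro y _
    simp only [and_iff_left_iff_imp]
    intro hy1
    obtain ⟨m, _, hm⟩ := (Nat.dvd_prime_pow hp).mp (hpow ▸ orderOf_dvd_card (x := y))
    have hm0 : m ≠ 0 := by
      rintro rfl
      exact hy1 (orderOf_eq_one_iff.mp (by simpa using hm))
    rw [hm, hradG, rad, Nat.primeFactors_pow _ hm0, Nat.Prime.primeFactors hp]
    simp
  rw [hEV]
  rw [Finset.filter_ne' Finset.univ 1, Finset.card_erase_of_mem (Finset.mem_univ 1),
    Finset.card_univ]
  omega
end

section
/- For a finite group G, |E_G| = 3 if and only if G ≅ Z/4Z or G ≅ Z/2Z × Z/2Z. -/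
lemma rad_two {n : ℕ} (h1 : 1 < n) (h2 : n.primeFactors ⊆ {2}) : rad n = 2 := by
  have : n.primeFactors = {2} := by
    apply Finset.Subset.antisymm h2
    obtain ⟨p, hp⟩ := Nat.nonempty_primeFactors.2 h1
    have := h2 hp
    simp only [Finset.mem_singleton] at this
    subst this
    simpa using hp
  simp [rad, this]

lemma primeFactors_eq_two {n : ℕ} (h : rad n = 2) : n.primeFactors = {2} := by
  have hsub : n.primeFactors ⊆ {2} := by
    intro p hp
    have hd : p ∣ rad n := Finset.dvd_prod_of_mem id hp
    rw [h] at hd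
    have hpp : p.Prime := Nat.prime_of_mem_primeFactors hp
    simp only [Finset.mem_singleton]
    exact (Nat.prime_dvd_prime_iff_eq hpp Nat.prime_two).1 hd
  have hne : n.primeFactors.Nonempty := by
    rcases Finset.eq_empty_or_nonempty n.primeFactors with h0 | h0
    · simp [rad, h0] at h
    · exact h0
  apply Finset.Subset.antisymm hsub
  obtain ⟨p, hp⟩ := hne
  have := hsub hp
  simp only [Finset.mem_singleton] at this
  subst this
  intro q hq
  simp only [Finset.mem_singleton] at hq
  subst hq
  exact hp

lemma endVerts_eq (G : Type*) [Group G] [Fintype G] [DecidableEq G]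
    (hrad : rad (Fintype.card G) = 2) :
    endVerts G = Finset.univ.filter (fun x => x ≠ 1) := by
  have hpf := primeFactors_eq_two hrad
  have hcard0 : Fintype.card G ≠ 0 := Fintype.card_ne_zero
  ext x
  simp only [endVerts, Finset.mem_filter, Finset.mem_univ, true_and, and_iff_left_iff_imp]
  intro hx
  rw [hrad]
  apply rad_two
  · have h1 := orderOf_eq_one_iff.not.2 hx
    have hpos := orderOf_pos x
    omega
  · rw [← hpf]
    exact Nat.primeFactors_mono orderOf_dvd_card hcard0

lemma rad_four : rad 4 = 2 := by
  apply rad_two (by norm_num)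
  rw [show (4:ℕ) = 2 ^ 2 from rfl, Nat.primeFactors_prime_pow (by norm_num) Nat.prime_two]

lemma card_four_of_endVerts (G : Type*) [Group G] [Fintype G] [DecidableEq G]
    (h : Fintype.card G = 4) : (endVerts G).card = 3 := by
  rw [endVerts_eq G (by rw [h]; exact rad_four), Finset.filter_ne',
    Finset.card_erase_of_mem (Finset.mem_univ 1), Finset.card_univ, h]

instance : IsAddKleinFour (ZMod 2 × ZMod 2) where
  card_four := by simp [Nat.card_eq_fintype_card]
  exponent_two := by
    apply Nat.dvd_antisymm
    · exact AddMonoid.exponent_dvd_of_forall_nsmul_eq_zero (by decide)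
    · have h2 : addOrderOf ((1, 0) : ZMod 2 × ZMod 2) = 2 :=
        addOrderOf_eq_prime (by decide) (by decide)
      have := AddMonoid.addOrder_dvd_exponent ((1, 0) : ZMod 2 × ZMod 2)
      rwa [h2] at this

theorem stmt10 (G : Type*) [Group G] [Fintype G] [DecidableEq G] :
    (endVerts G).card = 3 ↔
      (Nonempty (G ≃* Multiplicative (ZMod 4)) ∨
        Nonempty (G ≃* Multiplicative (ZMod 2 × ZMod 2))) := by
  constructor
  · intro h3
    -- E_G is closed under inverses
    have hinv : ∀ x ∈ endVerts G, x⁻¹ ∈ endVerts G := by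
      intro x hx
      simp only [endVerts, Finset.mem_filter, Finset.mem_univ, true_and] at hx ⊢
      exact ⟨inv_ne_one.2 hx.1, by rw [orderOf_inv]; exact hx.2⟩
    -- rad |G| = 2
    have hrad : rad (Fintype.card G) = 2 := by
      by_contra hne
      have hfree : ∀ x ∈ endVerts G, x⁻¹ ≠ x := by
        intro x hx hc
        simp only [endVerts, Finset.mem_filter, Finset.mem_univ, true_and] at hx
        have hsq : x ^ 2 = 1 := by
          rw [pow_two, mul_eq_one_iff_eq_inv]
          exact hc.symm
        have hdvd : orderOf x ∣ 2 := orderOf_dvd_of_pow_eq_one hsq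
        have h2 : orderOf x = 2 := by
          rcases (Nat.dvd_prime Nat.prime_two).1 hdvd with h | h
          · exact absurd (orderOf_eq_one_iff.1 h) hx.1
          · exact h
        apply hne
        rw [← hx.2, h2]
        simp [rad, Nat.Prime.primeFactors Nat.prime_two]
      obtain ⟨a, b, c, hab, hac, hbc, habc⟩ := Finset.card_eq_three.1 h3
      have ha : a ∈ endVerts G := by rw [habc]; simp
      have hb : b ∈ endVerts G := by rw [habc]; simp
      have hc : c ∈ endVerts G := by rw [habc]; simp
      have hai := hinv a ha
      rw [habc] at hai
      simp only [Finset.mem_insert, Finset.mem_singleton] at hai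
      rcases hai with h1 | h1 | h1
      · exact hfree a ha h1
      · have hci := hinv c hc
        rw [habc] at hci
        simp only [Finset.mem_insert, Finset.mem_singleton] at hci
        rcases hci with h2 | h2 | h2
        · exact hbc (by rw [← h1, ← h2]; simp)
        · exact hac (by rw [← inv_inv a, h1, ← h2]; simp)
        · exact hfree c hc h2
      · have hbi := hinv b hb
        rw [habc] at hbi
        simp only [Finset.mem_insert, Finset.mem_singleton] at hbi
        rcases hbi with h2 | h2 | h2
        · exact hbc (by rw [← h1, ← h2]; simp)
        · exact hfree b hb h2
        · exact hab (by rw [← inv_inv a, h1, ← h2]; simp)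
    -- hence |G| = 4
    have hcard : Fintype.card G = 4 := by
      rw [endVerts_eq G hrad, Finset.filter_ne',
        Finset.card_erase_of_mem (Finset.mem_univ 1), Finset.card_univ] at h3
      have := Fintype.card_pos (α := G)
      omega
    by_cases hcyc : ∃ x : G, orderOf x = 4
    · obtain ⟨x, hx⟩ := hcyc
      have hc : IsCyclic G := isCyclic_of_orderOf_eq_card x (by rw [hx, Nat.card_eq_fintype_card, hcard])
      have hn : Nat.card G = 4 := by rw [Nat.card_eq_fintype_card, hcard]
      have e := zmodCyclicMulEquiv hc
      rw [hn] at e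
      exact Or.inl ⟨e.symm⟩
    · push_neg at hcyc
      have hexp : ∀ x : G, x ^ 2 = 1 := by
        intro x
        have hdvd : orderOf x ∣ 4 := hcard ▸ orderOf_dvd_card
        have hne4 := hcyc x
        have hpos := orderOf_pos x
        have hmem : orderOf x ∈ Nat.divisors 4 := Nat.mem_divisors.2 ⟨hdvd, by norm_num⟩
        rw [show Nat.divisors 4 = {1, 2, 4} from by decide] at hmem
        simp only [Finset.mem_insert, Finset.mem_singleton] at hmem
        rcases hmem with h | h | h
        · rw [orderOf_eq_one_iff.1 h]; simp
        · rw [← h]; exact pow_orderOf_eq_one x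
        · exact absurd h hne4
      have : IsKleinFour G := by
        constructor
        · rw [Nat.card_eq_fintype_card, hcard]
        · apply Nat.dvd_antisymm
          · exact Monoid.exponent_dvd_of_forall_pow_eq_one hexp
          · obtain ⟨x, hx⟩ := exists_prime_orderOf_dvd_card 2 (by rw [hcard]; norm_num)
            have := Monoid.order_dvd_exponent x
            rwa [hx] at this
      exact Or.inr IsKleinFour.nonempty_mulEquiv
  · intro h
    apply card_four_of_endVerts
    rcases h with he | he
    · obtain ⟨e⟩ := he
      simpa using Fintype.card_congr e.toEquiv
    · obtain ⟨e⟩ := he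
      simpa using Fintype.card_congr e.toEquiv
end

section
/- For a finite group G, |E_G| = 2 if and only if G is isomorphic to Z/3Z, Z/6Z, the dihedral group D_12 of order 12, or the dicyclic group Dic_12 of order 12. -/
lemma mem_endVerts {G : Type*} [Group G] [Fintype G] [DecidableEq G] {x : G} :
    x ∈ endVerts G ↔ x ≠ 1 ∧ (orderOf x).primeFactors = (Fintype.card G).primeFactors := by
  simp [endVerts, rad_eq_iff]

lemma pf2 : Nat.primeFactors 2 = {2} := Nat.Prime.primeFactors Nat.prime_two
lemma pf3 : Nat.primeFactors 3 = {3} := Nat.Prime.primeFactors Nat.prime_three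
lemma pf4 : Nat.primeFactors 4 = {2} := by
  rw [show (4:ℕ) = 2^2 by norm_num, Nat.primeFactors_pow _ (by norm_num), pf2]
lemma pf6 : Nat.primeFactors 6 = {2,3} := by
  rw [show (6:ℕ) = 2*3 by norm_num, Nat.primeFactors_mul (by norm_num) (by norm_num), pf2, pf3]
  rfl
lemma pf12 : Nat.primeFactors 12 = {2,3} := by
  rw [show (12:ℕ) = 4*3 by norm_num, Nat.primeFactors_mul (by norm_num) (by norm_num), pf4, pf3]
  rfl
lemma pf18 : Nat.primeFactors 18 = {2,3} := by
  rw [show (18:ℕ) = 2*9 by norm_num, show (9:ℕ) = 3^2 by norm_num,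
    Nat.primeFactors_mul (by norm_num) (by norm_num), Nat.primeFactors_pow _ (by norm_num),
    pf2, pf3]
  rfl

lemma exists_k {n : ℕ} (h : n = 5 ∨ 7 ≤ n) : ∃ k, 2 ≤ k ∧ k ≤ n - 2 ∧ Nat.Coprime k n := by
  rcases Nat.even_or_odd n with he | ho
  · obtain ⟨t, ht⟩ := he
    have hn8 : 8 ≤ n := by omega
    set m := n / 2 with hm
    have hn2 : n = 2 * m := by omega
    rcases Nat.even_or_odd m with hme | hmo
    · refine ⟨m + 1, by omega, by omega, ?_⟩
      have hd2 : Nat.gcd (m+1) n ∣ 2 := by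
        have h1 : Nat.gcd (m+1) n ∣ 2*(m+1) := (Nat.gcd_dvd_left _ _).mul_left 2
        have h2 : Nat.gcd (m+1) n ∣ n := Nat.gcd_dvd_right _ _
        have h3 : Nat.gcd (m+1) n ∣ 2*(m+1) - n := Nat.dvd_sub h1 h2
        have h4 : 2*(m+1) - n = 2 := by omega
        rwa [h4] at h3
      have hodd : ¬ (2 ∣ m + 1) := by rcases hme with ⟨t, ht⟩; omega
      have : Nat.gcd (m+1) n ∣ m + 1 := Nat.gcd_dvd_left _ _
      unfold Nat.Coprime
      rcases (Nat.dvd_prime Nat.prime_two).mp hd2 with h | h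
      · exact h
      · exact absurd (h ▸ this) hodd
    · refine ⟨m + 2, by omega, by omega, ?_⟩
      have h1 : Nat.Coprime (m+2) 2 := by
        rw [Nat.coprime_two_right]
        rcases hmo with ⟨t, ht⟩
        exact ⟨t+1, by omega⟩
      have h2 : Nat.Coprime (m+2) m := by
        simpa [Nat.add_comm] using (Nat.coprime_add_self_left (m := 2) (n := m)).mpr
          (Nat.coprime_two_left.mpr hmo)
      rw [hn2]
      exact Nat.Coprime.mul_right h1 h2
  · refine ⟨2, le_refl _, by omega, ?_⟩
    exact (Nat.coprime_two_left.mpr ho)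

section Forward

variable {G : Type*} [Group G] [Fintype G] [DecidableEq G]

lemma three_le_card {x y z : G} (hx : x ∈ endVerts G) (hy : y ∈ endVerts G)
    (hz : z ∈ endVerts G) (hxy : x ≠ y) (hxz : x ≠ z) (hyz : y ≠ z) :
    3 ≤ (endVerts G).card := by
  have hsub : ({x, y, z} : Finset G) ⊆ endVerts G := by
    intro w hw
    simp only [Finset.mem_insert, Finset.mem_singleton] at hw
    rcases hw with rfl | rfl | rfl <;> assumption
  have h3 : ({x, y, z} : Finset G).card = 3 :=
    Finset.card_eq_three.mpr ⟨x, y, z, hxy, hxz, hyz, rfl⟩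
  rw [← h3]
  exact Finset.card_le_card hsub

lemma orderE (h2 : (endVerts G).card = 2) {x : G} (hx : x ∈ endVerts G) :
    orderOf x = 2 ∨ orderOf x = 3 ∨ orderOf x = 6 := by
  obtain ⟨hx1, hxpf⟩ := mem_endVerts.mp hx
  set n := orderOf x with hn
  have hnpos : 0 < n := orderOf_pos x
  have hn1 : n ≠ 1 := fun h => hx1 (orderOf_eq_one_iff.mp h)
  by_contra hcon
  push_neg at hcon
  obtain ⟨hne2, hne3, hne6⟩ := hcon
  -- case n = 4
  by_cases h4 : n = 4
  · have hx2 : x ^ 2 ∈ endVerts G := by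
      rw [mem_endVerts]
      constructor
      · intro h
        have hh : n ∣ 2 := orderOf_dvd_of_pow_eq_one h
        rw [h4] at hh
        norm_num at hh
      · have ho : orderOf (x ^ 2) = 2 := by
          rw [orderOf_pow, ← hn, h4]
          decide
        rw [ho, pf2, ← hxpf, h4, pf4]
    have hx3 : x ^ 3 ∈ endVerts G := by
      rw [mem_endVerts]
      constructor
      · intro h
        have hh : n ∣ 3 := orderOf_dvd_of_pow_eq_one h
        rw [h4] at hh
        norm_num at hh
      · have ho : orderOf (x ^ 3) = 4 := by
          rw [orderOf_pow, ← hn, h4]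
          decide
        rw [ho, ← hxpf, h4]
    have hd1 : x ≠ x ^ 2 := by
      intro h
      have := pow_injOn_Iio_orderOf (x := x) (by simp only [Set.mem_Iio]; omega : (1:ℕ) ∈ Set.Iio n)
        (by simp only [Set.mem_Iio]; omega : (2:ℕ) ∈ Set.Iio n) (by simpa using h)
      norm_num at this
    have hd2 : x ≠ x ^ 3 := by
      intro h
      have := pow_injOn_Iio_orderOf (x := x) (by simp only [Set.mem_Iio]; omega : (1:ℕ) ∈ Set.Iio n)
        (by simp only [Set.mem_Iio]; omega : (3:ℕ) ∈ Set.Iio n) (by simpa using h)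
      norm_num at this
    have hd3 : x ^ 2 ≠ x ^ 3 := by
      intro h
      have := pow_injOn_Iio_orderOf (x := x) (by simp only [Set.mem_Iio]; omega : (2:ℕ) ∈ Set.Iio n)
        (by simp only [Set.mem_Iio]; omega : (3:ℕ) ∈ Set.Iio n) h
      norm_num at this
    have := three_le_card hx hx2 hx3 hd1 hd2 hd3
    omega
  -- general case : n = 5 or n ≥ 7
  have hcase : n = 5 ∨ 7 ≤ n := by omega
  obtain ⟨k, hk2, hkn2, hkcop⟩ := exists_k hcase
  have hkn : k < n := by omega
  have hxk : x ^ k ∈ endVerts G := by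
    have ho : orderOf (x ^ k) = n := Nat.Coprime.orderOf_pow (by rw [← hn]; exact hkcop.symm)
    rw [mem_endVerts, ho]
    refine ⟨fun h => hn1 ?_, hxpf⟩
    rw [← ho, h, orderOf_one]
  have hxinv : x⁻¹ ∈ endVerts G := by
    rw [mem_endVerts, orderOf_inv]
    exact ⟨inv_ne_one.mpr hx1, hxpf⟩
  have hd1 : x ≠ x⁻¹ := by
    intro h
    have hxx : x * x = 1 := by nth_rewrite 2 [h]; exact mul_inv_cancel x
    have hp : x ^ 2 = 1 := by rw [pow_two]; exact hxx
    have hdd := orderOf_dvd_of_pow_eq_one hp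
    rw [← hn] at hdd
    have := Nat.le_of_dvd (by norm_num) hdd
    omega
  have hd2 : x ≠ x ^ k := by
    intro h
    have := pow_injOn_Iio_orderOf (x := x) (by simp only [Set.mem_Iio]; omega : (1:ℕ) ∈ Set.Iio n)
      (by simp only [Set.mem_Iio]; omega : (k:ℕ) ∈ Set.Iio n) (by simpa using h)
    omega
  have hd3 : x⁻¹ ≠ x ^ k := by
    intro h
    have : x ^ (k + 1) = 1 := by rw [pow_succ, ← h, inv_mul_cancel]
    have hdvd := orderOf_dvd_of_pow_eq_one this
    rw [← hn] at hdvd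
    have := Nat.le_of_dvd (by omega) hdvd
    omega
  have := three_le_card hx hxinv hxk hd1 hd2 hd3.symm.symm
  omega

lemma dvd_six_of {m : ℕ} (hm : m ≠ 0) (hpf : m.primeFactors ⊆ {2, 3}) (h4 : ¬ 4 ∣ m)
    (h9 : ¬ 9 ∣ m) : m ∣ 6 := by
  rw [← Nat.factorization_le_iff_dvd hm (by norm_num)]
  intro p
  by_cases hp2 : p = 2
  · subst hp2
    have hle : m.factorization 2 ≤ 1 := by
      by_contra h
      exact h4 (by
        have := (Nat.Prime.pow_dvd_iff_le_factorization Nat.prime_two hm).mpr (by omega : 2 ≤ m.factorization 2)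
        simpa using this)
    have h6 : 1 ≤ (6:ℕ).factorization 2 :=
      (Nat.Prime.pow_dvd_iff_le_factorization Nat.prime_two (by norm_num)).mp (by norm_num)
    omega
  by_cases hp3 : p = 3
  · subst hp3
    have hle : m.factorization 3 ≤ 1 := by
      by_contra h
      exact h9 (by
        have := (Nat.Prime.pow_dvd_iff_le_factorization Nat.prime_three hm).mpr (by omega : 2 ≤ m.factorization 3)
        simpa using this)
    have h6 : 1 ≤ (6:ℕ).factorization 3 :=
      (Nat.Prime.pow_dvd_iff_le_factorization Nat.prime_three (by norm_num)).mp (by norm_num)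
    omega
  · have : p ∉ m.primeFactors := by
      intro h
      have := hpf h
      simp only [Finset.mem_insert, Finset.mem_singleton] at this
      tauto
    rw [← Nat.support_factorization, Finsupp.notMem_support_iff] at this
    rw [this]
    exact Nat.zero_le _

omit [Fintype G] [DecidableEq G] in
lemma zpow_congr {n : ℕ} [NeZero n] {x : G} (hx : orderOf x = n) {a b : ℤ}
    (h : (a : ZMod n) = (b : ZMod n)) : x ^ a = x ^ b := by
  have hd : (n : ℤ) ∣ a - b := by
    have := (ZMod.intCast_eq_intCast_iff _ _ _).mp h
    exact Int.ModEq.dvd this.symm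
  have : x ^ (a - b) = 1 := by
    rw [← hx] at hd
    exact orderOf_dvd_iff_zpow_eq_one.mp hd
  rw [zpow_sub, mul_inv_eq_one] at this
  exact this

end Forward

section Forward2

variable {G : Type*} [Group G] [Fintype G] [DecidableEq G]

lemma card_eq_three_of_pf_singleton {p : ℕ}
    (hp : (Fintype.card G).primeFactors = {p}) (h2 : (endVerts G).card = 2) :
    Fintype.card G = 3 := by
  have hE : endVerts G = Finset.univ.erase 1 := by
    ext g
    rw [mem_endVerts, Finset.mem_erase]
    simp only [Finset.mem_univ, and_true]
    constructor
    · exact fun h => h.1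
    · intro hg
      refine ⟨hg, ?_⟩
      rw [hp]
      have hsub : (orderOf g).primeFactors ⊆ {p} := by
        rw [← hp]
        exact Nat.primeFactors_mono orderOf_dvd_card Fintype.card_ne_zero
      have hne : (orderOf g).primeFactors.Nonempty := by
        rw [Finset.nonempty_iff_ne_empty, Ne, Nat.primeFactors_eq_empty]
        push_neg
        exact ⟨(orderOf_pos g).ne', fun h => hg (orderOf_eq_one_iff.mp h)⟩
      rcases Finset.subset_singleton_iff.mp hsub with h | h
      · rw [h] at hne; exact absurd rfl hne.ne_empty
      · exact h
  have hcard : (Finset.univ.erase (1:G)).card = Fintype.card G - 1 := by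
    rw [Finset.card_erase_of_mem (Finset.mem_univ _), Finset.card_univ]
  rw [hE, hcard] at h2
  have := Fintype.card_pos (α := G)
  omega

omit [DecidableEq G] in
lemma iso_zmod {n : ℕ} (hn : 0 < n) (x : G) (hx : orderOf x = n)
    (hc : Fintype.card G = n) : Nonempty (G ≃* Multiplicative (ZMod n)) := by
  haveI : NeZero n := ⟨hn.ne'⟩
  let f : Multiplicative (ZMod n) →* G :=
    { toFun := fun i => x ^ ((ZMod.cast (Multiplicative.toAdd i) : ℤ))
      map_one' := by
        have : ((ZMod.cast (Multiplicative.toAdd (1 : Multiplicative (ZMod n))) : ℤ)) = 0 := by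
          simp
        show x ^ ((ZMod.cast (Multiplicative.toAdd (1 : Multiplicative (ZMod n))) : ℤ)) = 1
        rw [this, zpow_zero]
      map_mul' := by
        intro i j
        have : x ^ ((ZMod.cast (Multiplicative.toAdd (i * j)) : ℤ)) =
            x ^ ((ZMod.cast (Multiplicative.toAdd i) : ℤ) + (ZMod.cast (Multiplicative.toAdd j) : ℤ)) := by
          apply zpow_congr hx
          push_cast [ZMod.intCast_zmod_cast]
          rfl
        show x ^ ((ZMod.cast (Multiplicative.toAdd (i * j)) : ℤ)) = _ * _
        rw [this, zpow_add] }
  have hinj : Function.Injective f := by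
    rw [injective_iff_map_eq_one]
    intro i hi
    have : (orderOf x : ℤ) ∣ (ZMod.cast (Multiplicative.toAdd i) : ℤ) :=
      orderOf_dvd_iff_zpow_eq_one.mpr hi
    rw [hx] at this
    have h0 : ((ZMod.cast (Multiplicative.toAdd i) : ℤ) : ZMod n) = 0 :=
      (ZMod.intCast_zmod_eq_zero_iff_dvd _ _).mpr (by exact_mod_cast this)
    rw [ZMod.intCast_zmod_cast] at h0
    exact h0
  have hbij : Function.Bijective f := by
    rw [Fintype.bijective_iff_injective_and_card]
    refine ⟨hinj, ?_⟩
    rw [hc]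
    simp [ZMod.card]
  exact ⟨(MulEquiv.ofBijective f hbij).symm⟩

end Forward2

section Build

variable {G : Type*} [Group G] [Fintype G] [DecidableEq G]

omit [Fintype G] [DecidableEq G] in
lemma key_comm {x b : G} (hb : b * x * b⁻¹ = x⁻¹) :
    (∀ m : ℤ, b * x ^ m = x ^ (-m) * b) ∧ (∀ m : ℤ, x ^ m * b = b * x ^ (-m)) := by
  have h1 : ∀ m : ℤ, b * x ^ m * b⁻¹ = x ^ (-m) := by
    intro m
    rw [← conj_zpow, hb, inv_zpow, zpow_neg]
  have h2 : ∀ m : ℤ, b * x ^ m = x ^ (-m) * b := fun m =>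
    mul_inv_eq_iff_eq_mul.mp (h1 m)
  refine ⟨h2, fun m => ?_⟩
  have := h2 (-m)
  rw [neg_neg] at this
  exact this.symm

lemma build_dihedral (x b : G) (hx6 : orderOf x = 6) (hcard : Fintype.card G = 12)
    (hb : b * x * b⁻¹ = x⁻¹) (hb2 : b * b = 1) (hbn : b ∉ Subgroup.zpowers x) :
    Nonempty (G ≃* DihedralGroup 6) := by
  obtain ⟨key1, key2⟩ := key_comm hb
  have hzc : ∀ (u : ZMod 6) (v : ℤ), ((ZMod.cast u : ℤ) : ZMod 6) = (v : ZMod 6) →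
      x ^ (ZMod.cast u : ℤ) = x ^ v := fun u v h => zpow_congr hx6 h
  let f : DihedralGroup 6 →* G :=
    { toFun := fun g => match g with
        | .r i => x ^ (ZMod.cast i : ℤ)
        | .sr i => b * x ^ (ZMod.cast i : ℤ)
      map_one' := by
        show x ^ (ZMod.cast (0 : ZMod 6) : ℤ) = 1
        rw [ZMod.cast_zero, zpow_zero]
      map_mul' := by
        rintro (i | i) (j | j)
        · show x ^ (ZMod.cast (i + j) : ℤ) = x ^ (ZMod.cast i : ℤ) * x ^ (ZMod.cast j : ℤ)
          rw [← zpow_add]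
          exact hzc _ _ (by push_cast [ZMod.intCast_zmod_cast]; ring)
        · show b * x ^ (ZMod.cast (j - i) : ℤ) = x ^ (ZMod.cast i : ℤ) * (b * x ^ (ZMod.cast j : ℤ))
          rw [← mul_assoc, key2, mul_assoc, ← zpow_add]
          congr 1
          exact hzc _ _ (by push_cast [ZMod.intCast_zmod_cast]; ring)
        · show b * x ^ (ZMod.cast (i + j) : ℤ) = b * x ^ (ZMod.cast i : ℤ) * x ^ (ZMod.cast j : ℤ)
          rw [mul_assoc, ← zpow_add]
          congr 1
          exact hzc _ _ (by push_cast [ZMod.intCast_zmod_cast]; ring)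
        · show x ^ (ZMod.cast (j - i) : ℤ) = b * x ^ (ZMod.cast i : ℤ) * (b * x ^ (ZMod.cast j : ℤ))
          rw [mul_assoc, ← mul_assoc (x ^ (ZMod.cast i : ℤ)), key2, ← mul_assoc,
            ← mul_assoc, hb2, one_mul, ← zpow_add]
          exact hzc _ _ (by push_cast [ZMod.intCast_zmod_cast]; ring) }
  have hinj : Function.Injective f := by
    rw [injective_iff_map_eq_one]
    rintro (i | i) hg
    · have : (orderOf x : ℤ) ∣ (ZMod.cast i : ℤ) := orderOf_dvd_iff_zpow_eq_one.mpr hg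
      rw [hx6] at this
      have h0 : ((ZMod.cast i : ℤ) : ZMod 6) = 0 :=
        (ZMod.intCast_zmod_eq_zero_iff_dvd _ _).mpr (by exact_mod_cast this)
      rw [ZMod.intCast_zmod_cast] at h0
      rw [DihedralGroup.one_def, h0]
    · exfalso
      have h1 : b * x ^ (ZMod.cast i : ℤ) = 1 := hg
      have hbx : b = (x ^ (ZMod.cast i : ℤ))⁻¹ := eq_inv_of_mul_eq_one_left h1
      exact hbn (hbx ▸ (Subgroup.zpowers x).inv_mem
        (Subgroup.zpow_mem _ (Subgroup.mem_zpowers x) _))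
  have hbij : Function.Bijective f := by
    rw [Fintype.bijective_iff_injective_and_card]
    exact ⟨hinj, by rw [DihedralGroup.card, hcard]⟩
  exact ⟨(MulEquiv.ofBijective f hbij).symm⟩

lemma build_quaternion (x b : G) (hx6 : orderOf x = 6) (hcard : Fintype.card G = 12)
    (hb : b * x * b⁻¹ = x⁻¹) (hb2 : b * b = x ^ (3:ℤ)) (hbn : b ∉ Subgroup.zpowers x) :
    Nonempty (G ≃* QuaternionGroup 3) := by
  obtain ⟨key1, key2⟩ := key_comm hb
  have hx6' : orderOf x = 2 * 3 := by rw [hx6]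
  have hzc : ∀ (u : ZMod (2*3)) (v : ℤ), ((ZMod.cast u : ℤ) : ZMod (2*3)) = (v : ZMod (2*3)) →
      x ^ (ZMod.cast u : ℤ) = x ^ v := fun u v h => zpow_congr hx6' h
  let f : QuaternionGroup 3 →* G :=
    { toFun := fun g => match g with
        | .a i => x ^ (ZMod.cast i : ℤ)
        | .xa i => b * x ^ (ZMod.cast i : ℤ)
      map_one' := by
        show x ^ (ZMod.cast (0 : ZMod (2*3)) : ℤ) = 1
        rw [ZMod.cast_zero, zpow_zero]
      map_mul' := by
        rintro (i | i) (j | j)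
        · show x ^ (ZMod.cast (i + j) : ℤ) = x ^ (ZMod.cast i : ℤ) * x ^ (ZMod.cast j : ℤ)
          rw [← zpow_add]
          exact hzc _ _ (by push_cast [ZMod.intCast_zmod_cast]; ring)
        · show b * x ^ (ZMod.cast (j - i) : ℤ) = x ^ (ZMod.cast i : ℤ) * (b * x ^ (ZMod.cast j : ℤ))
          rw [← mul_assoc, key2, mul_assoc, ← zpow_add]
          congr 1
          exact hzc _ _ (by push_cast [ZMod.intCast_zmod_cast]; ring)
        · show b * x ^ (ZMod.cast (i + j) : ℤ) = b * x ^ (ZMod.cast i : ℤ) * x ^ (ZMod.cast j : ℤ)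
          rw [mul_assoc, ← zpow_add]
          congr 1
          exact hzc _ _ (by push_cast [ZMod.intCast_zmod_cast]; ring)
        · show x ^ (ZMod.cast (((3:ℕ) : ZMod (2*3)) + j - i) : ℤ) =
            b * x ^ (ZMod.cast i : ℤ) * (b * x ^ (ZMod.cast j : ℤ))
          rw [mul_assoc, ← mul_assoc (x ^ (ZMod.cast i : ℤ)), key2, ← mul_assoc,
            ← mul_assoc, hb2, ← zpow_add, ← zpow_add]
          exact hzc _ _ (by push_cast [ZMod.intCast_zmod_cast]; ring) }
  have hinj : Function.Injective f := by
    rw [injective_iff_map_eq_one]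
    rintro (i | i) hg
    · have : (orderOf x : ℤ) ∣ (ZMod.cast i : ℤ) := orderOf_dvd_iff_zpow_eq_one.mpr hg
      rw [hx6'] at this
      have h0 : ((ZMod.cast i : ℤ) : ZMod (2*3)) = 0 :=
        (ZMod.intCast_zmod_eq_zero_iff_dvd _ _).mpr (by exact_mod_cast this)
      rw [ZMod.intCast_zmod_cast] at h0
      rw [QuaternionGroup.one_def, h0]
    · exfalso
      have h1 : b * x ^ (ZMod.cast i : ℤ) = 1 := hg
      have hbx : b = (x ^ (ZMod.cast i : ℤ))⁻¹ := eq_inv_of_mul_eq_one_left h1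
      exact hbn (hbx ▸ (Subgroup.zpowers x).inv_mem
        (Subgroup.zpow_mem _ (Subgroup.mem_zpowers x) _))
  have hbij : Function.Bijective f := by
    rw [Fintype.bijective_iff_injective_and_card]
    exact ⟨hinj, by rw [QuaternionGroup.card, hcard]⟩
  exact ⟨(MulEquiv.ofBijective f hbij).symm⟩

end Build

section Case6

variable {G : Type*} [Group G] [Fintype G] [DecidableEq G]

lemma dvd6_cases {m : ℕ} (h : m ∣ 6) : m = 1 ∨ m = 2 ∨ m = 3 ∨ m = 6 := by
  have h6 := Nat.le_of_dvd (by norm_num) h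
  interval_cases m <;> revert h <;> decide

lemma case6 (h2 : (endVerts G).card = 2) (x : G) (hx : x ∈ endVerts G)
    (hx6 : orderOf x = 6) :
    Nonempty (G ≃* Multiplicative (ZMod 6)) ∨ Nonempty (G ≃* DihedralGroup 6) ∨
      Nonempty (G ≃* QuaternionGroup 3) := by
  obtain ⟨hx1, hxpf⟩ := mem_endVerts.mp hx
  rw [hx6, pf6] at hxpf
  -- hxpf : {2,3} = (card G).primeFactors
  have ordx2 : orderOf (x ^ 2) = 3 := by rw [orderOf_pow, hx6]; decide
  have ordx3 : orderOf (x ^ 3) = 2 := by rw [orderOf_pow, hx6]; decide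
  have hxne : x ≠ x⁻¹ := by
    intro h
    have hxx : x * x = 1 := by nth_rewrite 2 [h]; exact mul_inv_cancel x
    have hp : x ^ 2 = 1 := by rw [pow_two]; exact hxx
    have := orderOf_dvd_of_pow_eq_one hp
    rw [hx6] at this
    norm_num at this
  have hxinv : x⁻¹ ∈ endVerts G := by
    rw [mem_endVerts, orderOf_inv, hx6, pf6]
    exact ⟨inv_ne_one.mpr hx1, hxpf⟩
  have hEx : endVerts G = {x, x⁻¹} := by
    refine (Finset.eq_of_subset_of_card_le ?_ ?_).symm
    · intro w hw
      simp only [Finset.mem_insert, Finset.mem_singleton] at hw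
      rcases hw with rfl | rfl <;> assumption
    · rw [h2, Finset.card_insert_of_notMem (by simpa using hxne), Finset.card_singleton]
  have hmem : ∀ y : G, y ≠ 1 → (orderOf y).primeFactors = ({2,3} : Finset ℕ) →
      y = x ∨ y = x⁻¹ := by
    intro y hy1 hypf
    have : y ∈ endVerts G := mem_endVerts.mpr ⟨hy1, by rw [hypf]; exact hxpf⟩
    rw [hEx] at this
    simpa using this
  -- every element commuting with x is a power of x
  have hcent : ∀ g : G, g * x = x * g → g ∈ Subgroup.zpowers x := by
    intro g hc
    have hcomm : Commute g x := hc
    have hno : ∀ c : G, Commute c x → ¬ (orderOf c = 4 ∨ orderOf c = 9) := by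
      rintro c hcx (hc4 | hc9)
      · have hcm : Commute c (x ^ 2) := hcx.pow_right 2
        have hw : orderOf (c * x ^ 2) = 12 := by
          rw [hcm.orderOf_mul_eq_mul_orderOf_of_coprime (by rw [hc4, ordx2]; decide),
            hc4, ordx2]
        have hw1 : c * x ^ 2 ≠ 1 := by
          intro h; rw [h, orderOf_one] at hw; norm_num at hw
        rcases hmem _ hw1 (by rw [hw, pf12]) with h | h
        · rw [h, hx6] at hw; norm_num at hw
        · rw [h, orderOf_inv, hx6] at hw; norm_num at hw
      · have hcm : Commute c (x ^ 3) := hcx.pow_right 3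
        have hw : orderOf (c * x ^ 3) = 18 := by
          rw [hcm.orderOf_mul_eq_mul_orderOf_of_coprime (by rw [hc9, ordx3]; decide),
            hc9, ordx3]
        have hw1 : c * x ^ 3 ≠ 1 := by
          intro h; rw [h, orderOf_one] at hw; norm_num at hw
        rcases hmem _ hw1 (by rw [hw, pf18]) with h | h
        · rw [h, hx6] at hw; norm_num at hw
        · rw [h, orderOf_inv, hx6] at hw; norm_num at hw
    have hno4 : ¬ 4 ∣ orderOf g := by
      rintro ⟨c, hc4⟩
      have hcpos : 0 < c := by
        rcases Nat.eq_zero_or_pos c with rfl | h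
        · rw [Nat.mul_zero] at hc4; exact absurd hc4 (orderOf_pos g).ne'
        · exact h
      have hog : orderOf (g ^ c) = 4 := by
        rw [orderOf_pow, hc4, Nat.gcd_eq_right ⟨4, by ring⟩, Nat.mul_div_cancel _ hcpos]
      exact hno (g ^ c) ((hcomm.pow_left c)) (Or.inl hog)
    have hno9 : ¬ 9 ∣ orderOf g := by
      rintro ⟨c, hc9⟩
      have hcpos : 0 < c := by
        rcases Nat.eq_zero_or_pos c with rfl | h
        · rw [Nat.mul_zero] at hc9; exact absurd hc9 (orderOf_pos g).ne'
        · exact h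
      have hog : orderOf (g ^ c) = 9 := by
        rw [orderOf_pow, hc9, Nat.gcd_eq_right ⟨9, by ring⟩, Nat.mul_div_cancel _ hcpos]
      exact hno (g ^ c) ((hcomm.pow_left c)) (Or.inr hog)
    have hpfsub : (orderOf g).primeFactors ⊆ {2, 3} := by
      rw [hxpf]
      exact Nat.primeFactors_mono orderOf_dvd_card Fintype.card_ne_zero
    have hdvd6 : orderOf g ∣ 6 := dvd_six_of (orderOf_pos g).ne' hpfsub hno4 hno9
    rcases dvd6_cases hdvd6 with h1 | h1 | h1 | h1
    · rw [orderOf_eq_one_iff.mp h1]; exact Subgroup.one_mem _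
    · -- order 2 : g * x^2 has order 6
      have hcm : Commute g (x ^ 2) := hcomm.pow_right 2
      have hw : orderOf (g * x ^ 2) = 6 := by
        rw [hcm.orderOf_mul_eq_mul_orderOf_of_coprime (by rw [h1, ordx2]; decide), h1, ordx2]
      have hw1 : g * x ^ 2 ≠ 1 := by
        intro h; rw [h, orderOf_one] at hw; norm_num at hw
      have hgw : ∀ w : G, g * x ^ 2 = w → g = w * (x ^ 2)⁻¹ := by
        intro w h; rw [← h, mul_inv_cancel_right]
      rcases hmem _ hw1 (by rw [hw, pf6]) with h | h
      · rw [hgw _ h]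
        exact Subgroup.mul_mem _ (Subgroup.mem_zpowers x)
          ((Subgroup.zpowers x).inv_mem (Subgroup.pow_mem _ (Subgroup.mem_zpowers x) 2))
      · rw [hgw _ h]
        exact Subgroup.mul_mem _ ((Subgroup.zpowers x).inv_mem (Subgroup.mem_zpowers x))
          ((Subgroup.zpowers x).inv_mem (Subgroup.pow_mem _ (Subgroup.mem_zpowers x) 2))
    · -- order 3 : g * x^3 has order 6
      have hcm : Commute g (x ^ 3) := hcomm.pow_right 3
      have hw : orderOf (g * x ^ 3) = 6 := by
        rw [hcm.orderOf_mul_eq_mul_orderOf_of_coprime (by rw [h1, ordx3]; decide), h1, ordx3]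
      have hw1 : g * x ^ 3 ≠ 1 := by
        intro h; rw [h, orderOf_one] at hw; norm_num at hw
      have hgw : ∀ w : G, g * x ^ 3 = w → g = w * (x ^ 3)⁻¹ := by
        intro w h; rw [← h, mul_inv_cancel_right]
      rcases hmem _ hw1 (by rw [hw, pf6]) with h | h
      · rw [hgw _ h]
        exact Subgroup.mul_mem _ (Subgroup.mem_zpowers x)
          ((Subgroup.zpowers x).inv_mem (Subgroup.pow_mem _ (Subgroup.mem_zpowers x) 3))
      · rw [hgw _ h]
        exact Subgroup.mul_mem _ ((Subgroup.zpowers x).inv_mem (Subgroup.mem_zpowers x))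
          ((Subgroup.zpowers x).inv_mem (Subgroup.pow_mem _ (Subgroup.mem_zpowers x) 3))
    · -- order 6 : g itself is x or x⁻¹
      have hg1 : g ≠ 1 := by
        intro h; rw [h, orderOf_one] at h1; norm_num at h1
      rcases hmem _ hg1 (by rw [h1, pf6]) with h | h
      · rw [h]; exact Subgroup.mem_zpowers x
      · rw [h]; exact (Subgroup.zpowers x).inv_mem (Subgroup.mem_zpowers x)
  -- conjugation sends x to x or x⁻¹
  have hconj : ∀ g : G, g * x * g⁻¹ = x ∨ g * x * g⁻¹ = x⁻¹ := by
    intro g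
    have ho : orderOf (g * x * g⁻¹) = 6 := by
      have := orderOf_injective (MulAut.conj g).toMonoidHom (MulAut.conj g).injective x
      rw [← hx6]
      exact this
    have h1 : g * x * g⁻¹ ≠ 1 := by
      intro h; rw [h, orderOf_one] at ho; norm_num at ho
    exact hmem _ h1 (by rw [ho, pf6])
  -- the centralizer finset of x has exactly 6 elements
  set A : Finset G := Finset.univ.filter (fun g => g * x * g⁻¹ = x) with hA
  set B : Finset G := Finset.univ.filter (fun g => g * x * g⁻¹ = x⁻¹) with hB
  have hAeq : A = Finset.image (fun k : Fin 6 => x ^ (k : ℕ)) Finset.univ := by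
    ext g
    simp only [hA, Finset.mem_filter, Finset.mem_univ, true_and, Finset.mem_image]
    constructor
    · intro hg
      have : g ∈ Subgroup.zpowers x := hcent g (by
        have := mul_inv_eq_iff_eq_mul.mp hg
        rw [this])
      obtain ⟨k, hk⟩ := Subgroup.mem_zpowers_iff.mp this
      refine ⟨⟨(k % 6).toNat, by omega⟩, ?_⟩
      simp only [Fin.val_mk]
      rw [← zpow_natCast,
        show (((k % 6).toNat : ℕ) : ℤ) = k % 6 from Int.toNat_of_nonneg (by omega), ← hk]
      apply zpow_congr hx6
      rw [ZMod.intCast_eq_intCast_iff]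
      exact Int.emod_emod_of_dvd k dvd_rfl
    · rintro ⟨k, -, rfl⟩
      have hcm : Commute (x ^ (k:ℕ)) x := (Commute.refl x).pow_left _
      rw [mul_inv_eq_iff_eq_mul, hcm]
  have hAcard : A.card = 6 := by
    rw [hAeq, Finset.card_image_of_injective _ ?_, Finset.card_univ, Fintype.card_fin]
    intro i j hij
    have := pow_injOn_Iio_orderOf (x := x)
      (by simp only [Set.mem_Iio, hx6]; exact i.isLt) (by simp only [Set.mem_Iio, hx6]; exact j.isLt) hij
    exact Fin.ext this
  have hdisj : Disjoint A B := by
    rw [Finset.disjoint_left]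
    intro g hga hgb
    simp only [hA, hB, Finset.mem_filter, Finset.mem_univ, true_and] at hga hgb
    rw [hga] at hgb
    exact hxne hgb
  have hunion : Finset.univ = A ∪ B := by
    ext g
    simp only [Finset.mem_univ, true_iff, Finset.mem_union, hA, hB, Finset.mem_filter, true_and]
    exact hconj g
  have hcardAB : Fintype.card G = A.card + B.card := by
    rw [← Finset.card_univ, hunion, Finset.card_union_of_disjoint hdisj]
  by_cases hBe : B = ∅
  · left
    rw [hBe] at hcardAB
    simp only [Finset.card_empty, add_zero, hAcard] at hcardAB
    exact iso_zmod (by norm_num) x hx6 hcardAB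
  · obtain ⟨b, hbB⟩ := Finset.nonempty_iff_ne_empty.mpr hBe
    simp only [hB, Finset.mem_filter, Finset.mem_univ, true_and] at hbB
    -- hbB : b * x * b⁻¹ = x⁻¹
    have hBcard : B.card = 6 := by
      have hBim : B = A.image (fun a => b * a) := by
        ext c
        simp only [hA, hB, Finset.mem_filter, Finset.mem_univ, true_and, Finset.mem_image]
        constructor
        · intro hc
          refine ⟨b⁻¹ * c, ?_, by group⟩
          show b⁻¹ * c * x * (b⁻¹ * c)⁻¹ = x
          have : b⁻¹ * x⁻¹ * b = x := by
            rw [← hbB]; group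
          calc b⁻¹ * c * x * (b⁻¹ * c)⁻¹ = b⁻¹ * (c * x * c⁻¹) * b := by group
            _ = b⁻¹ * x⁻¹ * b := by rw [hc]
            _ = x := this
        · rintro ⟨a, ha, rfl⟩
          calc b * a * x * (b * a)⁻¹ = b * (a * x * a⁻¹) * b⁻¹ := by group
            _ = b * x * b⁻¹ := by rw [ha]
            _ = x⁻¹ := hbB
      rw [hBim, Finset.card_image_of_injective _ (mul_right_injective b), hAcard]
    have hcard12 : Fintype.card G = 12 := by rw [hcardAB, hAcard, hBcard]
    have hbn : b ∉ Subgroup.zpowers x := by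
      intro hmemb
      obtain ⟨k, hk⟩ := Subgroup.mem_zpowers_iff.mp hmemb
      have : b * x * b⁻¹ = x := by
        rw [← hk]
        have hcm : Commute (x ^ k) x := (Commute.refl x).zpow_left _
        rw [mul_inv_eq_iff_eq_mul, hcm]
      rw [this] at hbB
      exact hxne hbB
    -- b^2 is 1 or x^3
    have hb2mem : b * b ∈ Subgroup.zpowers x := by
      apply hcent
      have h1 : b⁻¹ * x⁻¹ * b = x := by rw [← hbB]; group
      have : b * b * x * (b * b)⁻¹ = x := by
        calc b * b * x * (b * b)⁻¹ = b * (b * x * b⁻¹) * b⁻¹ := by group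
          _ = b * x⁻¹ * b⁻¹ := by rw [hbB]
          _ = (b * x * b⁻¹)⁻¹ := by group
          _ = x := by rw [hbB, inv_inv]
      exact mul_inv_eq_iff_eq_mul.mp this
    obtain ⟨k, hk⟩ := Subgroup.mem_zpowers_iff.mp hb2mem
    have hconjk : x ^ (-k) = x ^ k := by
      have h1 : b * x ^ k * b⁻¹ = x ^ (-k) := by
        rw [← conj_zpow, hbB, inv_zpow, zpow_neg]
      calc x ^ (-k) = b * x ^ k * b⁻¹ := h1.symm
        _ = b * (b * b) * b⁻¹ := by rw [hk]
        _ = b * b := by group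
        _ = x ^ k := hk.symm
    have hdvd : (6:ℤ) ∣ 2 * k := by
      have hone : x ^ (2 * k) = 1 := by
        have h2 : x ^ k * x ^ (-k) = 1 := by rw [← zpow_add]; simp
        calc x ^ (2*k) = x ^ k * x ^ k := by rw [two_mul, zpow_add]
          _ = x ^ k * x ^ (-k) := by rw [hconjk]
          _ = 1 := h2
      have hdd := orderOf_dvd_iff_zpow_eq_one.mpr hone
      rw [hx6] at hdd
      exact_mod_cast hdd
    have hk3 : (3:ℤ) ∣ k := by omega
    obtain ⟨j, hj⟩ := hk3
    have hx6z : x ^ (6:ℤ) = 1 := by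
      rw [show (6:ℤ) = ((6:ℕ):ℤ) by norm_num, zpow_natCast, ← hx6, pow_orderOf_eq_one]
    have hb2 : b * b = 1 ∨ b * b = x ^ (3:ℤ) := by
      rcases Int.even_or_odd j with ⟨t, ht⟩ | ⟨t, ht⟩
      · left
        rw [← hk, hj, ht]
        have : (3 : ℤ) * (t + t) = 6 * t := by ring
        rw [this, zpow_mul, hx6z]
        group
      · right
        rw [← hk, hj, ht]
        have : (3 : ℤ) * (2 * t + 1) = 6 * t + 3 := by ring
        rw [this, zpow_add, zpow_mul, hx6z]
        group
    rcases hb2 with hb2 | hb2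
    · exact Or.inr (Or.inl (build_dihedral x b hx6 hcard12 hbB hb2 hbn))
    · exact Or.inr (Or.inr (build_quaternion x b hx6 hcard12 hbB hb2 hbn))

end Case6

section Reverse

lemma endVerts_card_congr {G H : Type*} [Group G] [Fintype G] [DecidableEq G]
    [Group H] [Fintype H] [DecidableEq H] (e : G ≃* H) :
    (endVerts G).card = (endVerts H).card := by
  have hc : Fintype.card G = Fintype.card H := Fintype.card_congr e.toEquiv
  have himg : (endVerts G).image e = endVerts H := by
    ext y
    constructor
    · intro hy
      obtain ⟨g, hg, rfl⟩ := Finset.mem_image.mp hy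
      obtain ⟨h1, h2⟩ := mem_endVerts.mp hg
      rw [mem_endVerts,
        show orderOf (e g) = orderOf g from orderOf_injective e.toMonoidHom e.injective g, ← hc]
      refine ⟨fun h => h1 ?_, h2⟩
      exact e.injective (by rw [h, map_one])
    · intro hy
      obtain ⟨h1, h2⟩ := mem_endVerts.mp hy
      refine Finset.mem_image.mpr ⟨e.symm y, ?_, by simp⟩
      rw [mem_endVerts,
        show orderOf (e.symm y) = orderOf y from
          orderOf_injective e.symm.toMonoidHom e.symm.injective y, hc]
      refine ⟨fun h => h1 ?_, h2⟩
      exact e.symm.injective (by rw [h, map_one])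
  rw [← himg, Finset.card_image_of_injective _ e.injective]

lemma pf_cond {v : ℕ} (hv : v < 6) :
    ((6 / Nat.gcd 6 v).primeFactors = {2, 3}) ↔ (v = 1 ∨ v = 5) := by
  interval_cases v <;>
    norm_num [Nat.primeFactors_one, pf6, pf3, pf2] <;> decide

lemma cardZ3 : (endVerts (Multiplicative (ZMod 3))).card = 2 := by
  have hc : Fintype.card (Multiplicative (ZMod 3)) = 3 := by
    rw [Fintype.card_multiplicative, ZMod.card]
  have hE : endVerts (Multiplicative (ZMod 3)) = Finset.univ.erase 1 := by
    ext g
    rw [mem_endVerts, Finset.mem_erase]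
    simp only [Finset.mem_univ, and_true]
    constructor
    · exact fun h => h.1
    · intro hg
      refine ⟨hg, ?_⟩
      have hdvd : orderOf g ∣ Fintype.card (Multiplicative (ZMod 3)) := orderOf_dvd_card
      rw [hc] at hdvd
      rcases (Nat.Prime.eq_one_or_self_of_dvd Nat.prime_three _ hdvd) with h | h
      · exact absurd (orderOf_eq_one_iff.mp h) hg
      · rw [h, hc]
  rw [hE, Finset.card_erase_of_mem (Finset.mem_univ _), Finset.card_univ, hc]

lemma addOrderOf_zmod6 (a : ZMod 6) : addOrderOf a = 6 / Nat.gcd 6 a.val := by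
  conv_lhs => rw [← ZMod.natCast_rightInverse a]
  rw [ZMod.addOrderOf_coe _ (by norm_num)]

lemma cardZ6 : (endVerts (Multiplicative (ZMod 6))).card = 2 := by
  have hc : Fintype.card (Multiplicative (ZMod 6)) = 6 := by
    rw [Fintype.card_multiplicative, ZMod.card]
  have hE : endVerts (Multiplicative (ZMod 6)) =
      {Multiplicative.ofAdd (1 : ZMod 6), Multiplicative.ofAdd (5 : ZMod 6)} := by
    ext g
    obtain ⟨a, rfl⟩ : ∃ a : ZMod 6, Multiplicative.ofAdd a = g := ⟨Multiplicative.toAdd g, rfl⟩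
    rw [mem_endVerts, hc, pf6, orderOf_ofAdd_eq_addOrderOf a,
      addOrderOf_zmod6, pf_cond (ZMod.val_lt _)]
    fin_cases a <;> decide
  rw [hE]
  decide

lemma cardD12 : (endVerts (DihedralGroup 6)).card = 2 := by
  have hc : Fintype.card (DihedralGroup 6) = 12 := DihedralGroup.card
  have hE : endVerts (DihedralGroup 6) =
      {DihedralGroup.r (1 : ZMod 6), DihedralGroup.r (5 : ZMod 6)} := by
    ext g
    rw [mem_endVerts, hc, pf12]
    rcases g with i | i
    · rw [DihedralGroup.orderOf_r, pf_cond (ZMod.val_lt _)]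
      fin_cases i <;> decide
    · rw [DihedralGroup.orderOf_sr, pf2]
      constructor
      · rintro ⟨-, h⟩
        exact absurd h (by decide)
      · intro h
        simp only [Finset.mem_insert, Finset.mem_singleton] at h
        rcases h with h | h <;> simp at h
  rw [hE]
  decide

lemma cardQ12 : (endVerts (QuaternionGroup 3)).card = 2 := by
  have hc : Fintype.card (QuaternionGroup 3) = 12 := QuaternionGroup.card
  have hE : endVerts (QuaternionGroup 3) =
      {QuaternionGroup.a (1 : ZMod (2*3)), QuaternionGroup.a (5 : ZMod (2*3))} := by
    ext g
    rw [mem_endVerts, hc, pf12]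
    rcases g with i | i
    · rw [QuaternionGroup.orderOf_a,
        show (2*3 : ℕ) / Nat.gcd (2*3) (ZMod.val i) = 6 / Nat.gcd 6 (ZMod.val i) from rfl,
        pf_cond (show ZMod.val i < 6 from ZMod.val_lt _)]
      fin_cases i <;> decide
    · rw [QuaternionGroup.orderOf_xa, pf4]
      constructor
      · rintro ⟨-, h⟩
        exact absurd h (by decide)
      · intro h
        simp only [Finset.mem_insert, Finset.mem_singleton] at h
        rcases h with h | h <;> simp at h
  rw [hE]
  decide

end Reverse

theorem stmt12 (G : Type*) [Group G] [Fintype G] [DecidableEq G] :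
    (endVerts G).card = 2 ↔
      (Nonempty (G ≃* Multiplicative (ZMod 3)) ∨
        Nonempty (G ≃* Multiplicative (ZMod 6)) ∨
        Nonempty (G ≃* DihedralGroup 6) ∨
        Nonempty (G ≃* QuaternionGroup 3)) := by
  constructor
  · intro h2
    obtain ⟨x, hx⟩ := Finset.card_pos.mp (by rw [h2]; norm_num)
    rcases orderE h2 hx with h | h | h
    · exfalso
      obtain ⟨hx1, hxpf⟩ := mem_endVerts.mp hx
      rw [h, pf2] at hxpf
      have h3 := card_eq_three_of_pf_singleton hxpf.symm h2
      have hdvd : orderOf x ∣ Fintype.card G := orderOf_dvd_card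
      rw [h, h3] at hdvd
      norm_num at hdvd
    · left
      obtain ⟨hx1, hxpf⟩ := mem_endVerts.mp hx
      rw [h, pf3] at hxpf
      have h3 := card_eq_three_of_pf_singleton hxpf.symm h2
      exact iso_zmod (by norm_num) x h h3
    · rcases case6 h2 x hx h with h' | h' | h'
      · exact Or.inr (Or.inl h')
      · exact Or.inr (Or.inr (Or.inl h'))
      · exact Or.inr (Or.inr (Or.inr h'))
  · rintro (h | h | h | h) <;> obtain ⟨e⟩ := h
    · exact (endVerts_card_congr e).trans cardZ3
    · exact (endVerts_card_congr e).trans cardZ6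
    · exact (endVerts_card_congr e).trans cardD12
    · exact (endVerts_card_congr e).trans cardQ12
end

section
/- Let G be a finite group with |G| ≥ 3 and suppose x ∈ E_G and g ∈ C_G(x) with rad(|g|) < rad(|G|). Set d = rad(|G|)/rad(|g|) and z = x^{|x|/d}. Then gz ∈ E_G ∩ C_G(x) and g ∈ ⟨gz⟩. -/
lemma rad_pos (m : ℕ) : 0 < rad m :=
  Finset.prod_pos fun p hp => (Nat.prime_of_mem_primeFactors hp).pos

lemma rad_dvd (m : ℕ) : rad m ∣ m := Nat.prod_primeFactors_dvd m

lemma primeFactors_rad (m : ℕ) : (rad m).primeFactors = m.primeFactors := by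
  show (∏ p ∈ m.primeFactors, p).primeFactors = m.primeFactors
  exact Nat.primeFactors_prod fun p hp => Nat.prime_of_mem_primeFactors hp

lemma rad_squarefree (m : ℕ) : Squarefree (rad m) := by
  rw [Nat.squarefree_iff_prime_squarefree]
  intro p hp hdvd
  have hpd : p ∣ rad m := (dvd_mul_right p p).trans hdvd
  have hpmem : p ∈ m.primeFactors := by
    obtain ⟨q, hq, hpq⟩ := (hp.prime.dvd_finset_prod_iff id).mp hpd
    have hpq' := (Nat.prime_dvd_prime_iff_eq hp (Nat.prime_of_mem_primeFactors hq)).mp hpq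
    rwa [hpq']
  have hsplit : rad m = p * (m.primeFactors.erase p).prod id :=
    (Finset.mul_prod_erase _ id hpmem).symm
  rw [hsplit] at hdvd
  have hrest : p ∣ (m.primeFactors.erase p).prod id :=
    (mul_dvd_mul_iff_left (a := p) (by exact_mod_cast hp.ne_zero)).mp
      (by exact_mod_cast hdvd)
  obtain ⟨q, hq, hpq⟩ := (hp.prime.dvd_finset_prod_iff id).mp hrest
  have : p = q :=
    ((Nat.prime_dvd_prime_iff_eq hp (Nat.prime_of_mem_primeFactors
      (Finset.mem_of_mem_erase hq))).mp hpq)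
  exact (Finset.ne_of_mem_erase hq).symm this

lemma rad_eq_of_squarefree {m : ℕ} (h : Squarefree m) : rad m = m :=
  Nat.prod_primeFactors_of_squarefree h

theorem stmt19 (G : Type*) [Group G] [Fintype G] [DecidableEq G]
    (hG : 3 ≤ Fintype.card G) (x g : G) (hx : x ∈ endVerts G)
    (hg : g ∈ Subgroup.centralizer {x})
    (hlt : rad (orderOf g) < rad (Fintype.card G)) :
    g * x ^ (orderOf x / (rad (Fintype.card G) / rad (orderOf g))) ∈ endVerts G ∧
      g * x ^ (orderOf x / (rad (Fintype.card G) / rad (orderOf g)))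
        ∈ Subgroup.centralizer {x} ∧
      g ∈ Subgroup.zpowers
        (g * x ^ (orderOf x / (rad (Fintype.card G) / rad (orderOf g)))) := by
  classical
  simp only [endVerts, Finset.mem_filter, Finset.mem_univ, true_and] at hx
  obtain ⟨hx1, hxr⟩ := hx
  set a := orderOf g with ha
  set n := rad (Fintype.card G) with hn
  set r := rad a with hr
  set d := n / r with hd
  set z := x ^ (orderOf x / d) with hz
  have hx0 : orderOf x ≠ 0 := (orderOf_pos x).ne'
  have ha0 : a ≠ 0 := (orderOf_pos g).ne'
  have hrn : r ∣ n :=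
    Finset.prod_dvd_prod_of_subset _ _ id
      (Nat.primeFactors_mono (orderOf_dvd_card) Fintype.card_ne_zero)
  have hrpos : 0 < r := rad_pos a
  have hnpos : 0 < n := rad_pos _
  have hrdn : r * d = n := Nat.mul_div_cancel' hrn
  have hd2 : 2 ≤ d := by nlinarith [hlt, hrpos, hrdn]
  have hd0 : d ≠ 0 := by omega
  have hnsq : Squarefree n := rad_squarefree _
  obtain ⟨hcop_rd, _, hdsq⟩ := Nat.squarefree_mul_iff.mp (hrdn ▸ hnsq)
  have hdn : d ∣ n := ⟨r, by rw [← hrdn, mul_comm]⟩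
  have hddvdx : d ∣ orderOf x := hdn.trans (hxr ▸ rad_dvd (orderOf x))
  have hzd : orderOf z = d := by
    rw [hz, orderOf_pow, Nat.gcd_eq_right (Nat.div_dvd_of_dvd hddvdx),
      Nat.div_div_self hddvdx hx0]
  have hcxg : Commute x g := Subgroup.mem_centralizer_iff.mp hg x rfl
  have hcgz : Commute g z := (hcxg.symm).pow_right _
  have hcop_ad : Nat.Coprime a d := by
    rw [← Nat.disjoint_primeFactors ha0 hd0, ← primeFactors_rad a]
    exact hcop_rd.disjoint_primeFactors
  have horder : orderOf (g * z) = a * d := by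
    rw [hcgz.orderOf_mul_eq_mul_orderOf_of_coprime (hzd ▸ hcop_ad), hzd]
  have hradgz : rad (orderOf (g * z)) = n := by
    rw [horder]
    show (a * d).primeFactors.prod id = n
    rw [Nat.primeFactors_mul ha0 hd0,
      Finset.prod_union hcop_ad.disjoint_primeFactors]
    have h2 : (d.primeFactors.prod id) = d := rad_eq_of_squarefree hdsq
    show r * d.primeFactors.prod id = n
    rw [h2, hrdn]
  have hgz1 : g * z ≠ 1 := by
    intro hcontra
    have : orderOf (g * z) = 1 := by rw [hcontra, orderOf_one]
    rw [horder] at this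
    nlinarith [Nat.one_le_iff_ne_zero.mpr ha0]
  refine ⟨?_, ?_, ?_⟩
  · simp only [endVerts, Finset.mem_filter, Finset.mem_univ, true_and]
    exact ⟨hgz1, hradgz⟩
  · rw [Subgroup.mem_centralizer_iff]
    intro y hy
    rw [Set.mem_singleton_iff] at hy
    rw [hy]
    exact (hcxg.mul_right ((Commute.refl x).pow_right _))
  · obtain ⟨k, hk1, hk0⟩ := Nat.chineseRemainder hcop_ad 1 0
    rw [Subgroup.mem_zpowers_iff]
    refine ⟨(k : ℤ), ?_⟩
    rw [zpow_natCast, hcgz.mul_pow]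
    have hgk : g ^ k = g := by
      conv_rhs => rw [← pow_one g]
      exact pow_eq_pow_iff_modEq.mpr (by rwa [← ha])
    have hzk : z ^ k = 1 := by
      rw [← pow_zero z]
      exact pow_eq_pow_iff_modEq.mpr (by rwa [hzd])
    rw [hgk, hzk, mul_one]
end
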